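/- Let P be a finite nonempty partially ordered set with random weights W : P → [0,1] whose coordinates are independent and uniform on [0,1]. Then for every x ∈ P and every 0 < t ≤ 1, μ_t(x) ≥ μ(x); that is, the conditional probability that x is the greedy maximum of (P, W) given W(x) ≤ t is at least the unconditional probability that x is the greedy maximum of (P, W). -/
import Mathlib


open MeasureTheory Finset Function
open scoped Classical ENNReal

/-- The element of the finset `s` with minimum weight. -/
noncomputable def argminOn {α : Type*} (w : α → ℝ) (s : Finset α) (h : s.Nonempty) : α :=
  (s.exists_min_image w h).choose

/-- One step of the greedy chain: if `x` is not maximal, move to the element of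
minimum weight among those strictly above `x`; otherwise stay at `x`. -/
noncomputable def greedyStep {α : Type*} [PartialOrder α] [Fintype α] (w : α → ℝ) (x : α) : α :=
  if h : (Finset.univ.filter fun y => x < y).Nonempty then argminOn w _ h else x

/-- The greedy maximum of a finite nonempty partially ordered set with weights `w`:
start at the element of minimum weight and iterate `greedyStep` until stabilization
(`Fintype.card α` iterations suffice). -/
noncomputable def greedyMax {α : Type*} [PartialOrder α] [Fintype α] [Nonempty α]
    (w : α → ℝ) : α :=
  (greedyStep w)^[Fintype.card α] (argminOn w Finset.univ Finset.univ_nonempty)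

/-- `x` belongs to `s` and is the greedy maximum of the partial order induced on `s`,
with the weights `w` restricted to `s`. -/
def IsGreedyMaxOn {α : Type*} [PartialOrder α] [Fintype α]
    (w : α → ℝ) (s : Set α) (x : α) : Prop :=
  ∃ hx : x ∈ s,
    haveI : Nonempty s := ⟨⟨x, hx⟩⟩
    greedyMax (fun y : s => w y.1) = ⟨x, hx⟩

/-- `x` is *tagged*: it is the greedy maximum (w.r.t. the weights `w`) of the induced
partial order on the set of elements arriving no later than `x`. -/
def Tagged {α : Type*} [PartialOrder α] [Fintype α] (T w : α → ℝ) (x : α) : Prop :=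
  IsGreedyMaxOn w {y | T y ≤ T x} x

/-- The strategy accepts `x`: `x` is tagged, arrives after time `1/e`, and no other
element is tagged with arrival time in `(1/e, T x)`. -/
def Accepts {α : Type*} [PartialOrder α] [Fintype α] (T w : α → ℝ) (x : α) : Prop :=
  Tagged T w x ∧ 1 / Real.exp 1 < T x ∧
    ∀ y, Tagged T w y → 1 / Real.exp 1 < T y → T x ≤ T y

/-- The probability that `x` is the greedy maximum of `P` when the weights are
independent and uniform on `[0,1]`. -/
noncomputable def muGreedy (P : Type) [Fintype P] [PartialOrder P] (x : P) : ℝ≥0∞ :=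
  (Measure.pi fun _ : P => volume.restrict (Set.Icc (0:ℝ) 1)) {w | IsGreedyMaxOn w Set.univ x}

/-- The conditional probability that `x` is the greedy maximum of `P`, given `W x ≤ t`,
when the weights are independent and uniform on `[0,1]`. -/
noncomputable def muGreedyCond (P : Type) [Fintype P] [PartialOrder P] (t : ℝ) (x : P) : ℝ≥0∞ :=
  (Measure.pi fun _ : P => volume.restrict (Set.Icc (0:ℝ) 1))
      {w | IsGreedyMaxOn w Set.univ x ∧ w x ≤ t} /
    (Measure.pi fun _ : P => volume.restrict (Set.Icc (0:ℝ) 1)) {w | w x ≤ t}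


set_option linter.unusedSectionVars false
set_option maxHeartbeats 1000000

section Det

variable {α : Type*} [PartialOrder α] [Fintype α]

lemma argminOn_mem (w : α → ℝ) (s : Finset α) (h : s.Nonempty) : argminOn w s h ∈ s :=
  (s.exists_min_image w h).choose_spec.1

lemma argminOn_le (w : α → ℝ) (s : Finset α) (h : s.Nonempty) {y : α} (hy : y ∈ s) :
    w (argminOn w s h) ≤ w y :=
  (s.exists_min_image w h).choose_spec.2 y hy

lemma argminOn_unique {w : α → ℝ} (hw : Injective w) {s : Finset α} (h : s.Nonempty)
    {a : α} (ha : a ∈ s) (hmin : ∀ y ∈ s, w a ≤ w y) : argminOn w s h = a :=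
  hw (le_antisymm (argminOn_le w s h ha) (hmin _ (argminOn_mem w s h)))

lemma greedyStep_of_max (w : α → ℝ) {z : α}
    (h : ¬ (Finset.univ.filter fun y => z < y).Nonempty) : greedyStep w z = z := dif_neg h

lemma lt_greedyStep (w : α → ℝ) {z : α}
    (h : (Finset.univ.filter fun y => z < y).Nonempty) : z < greedyStep w z := by
  rw [greedyStep, dif_pos h]
  have := argminOn_mem w _ h
  simpa using (Finset.mem_filter.mp this).2

lemma card_filter_lt_of_lt {z a : α} (hza : z < a) :
    (Finset.univ.filter fun y => a < y).card < (Finset.univ.filter fun y => z < y).card := by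
  apply Finset.card_lt_card
  constructor
  · intro y hy
    simp only [Finset.mem_filter, Finset.mem_univ, true_and] at hy ⊢
    exact hza.trans hy
  · intro hsub
    have := hsub (by simp [hza] : a ∈ Finset.univ.filter fun y => z < y)
    simp at this

lemma greedyStep_iterate_fix (w : α → ℝ) :
    ∀ n (z : α), (Finset.univ.filter fun y => z < y).card ≤ n →
      greedyStep w ((greedyStep w)^[n] z) = (greedyStep w)^[n] z := by
  intro n
  induction n with
  | zero =>
    intro z hz
    have he : ¬ (Finset.univ.filter fun y => z < y).Nonempty := by
      rw [Finset.nonempty_iff_ne_empty]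
      simp only [ne_eq, not_not]
      exact Finset.card_eq_zero.mp (Nat.le_zero.mp hz)
    simp [greedyStep_of_max w he]
  | succ n ih =>
    intro z hz
    by_cases h : (Finset.univ.filter fun y => z < y).Nonempty
    · rw [Function.iterate_succ_apply]
      exact ih (greedyStep w z) (by
        have := card_filter_lt_of_lt (a := greedyStep w z) (lt_greedyStep w h)
        omega)
    · simp [Function.iterate_fixed (greedyStep_of_max w h), greedyStep_of_max w h]

lemma terminal_fix (w : α → ℝ) (z : α) :
    greedyStep w ((greedyStep w)^[Fintype.card α] z) = (greedyStep w)^[Fintype.card α] z :=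
  greedyStep_iterate_fix w _ z (le_trans (Finset.card_filter_le _ _) (by simp))

lemma terminal_step (w : α → ℝ) (z : α) :
    (greedyStep w)^[Fintype.card α] (greedyStep w z) = (greedyStep w)^[Fintype.card α] z := by
  rw [← Function.iterate_succ_apply, Function.iterate_succ_apply', terminal_fix]

lemma terminal_max (w : α → ℝ) (z : α) :
    ¬ (Finset.univ.filter fun y => ((greedyStep w)^[Fintype.card α] z) < y).Nonempty := by
  intro h
  exact absurd (terminal_fix w z) (ne_of_gt (lt_greedyStep w h))

lemma pattern_injective {v w : α → ℝ} (hw : Injective w)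
    (hpat : ∀ a b, w a < w b ↔ v a < v b) : Injective v := by
  intro a b hab
  by_contra hne
  rcases lt_or_gt_of_ne (fun h : w a = w b => hne (hw h)) with h | h
  · exact absurd ((hpat a b).mp h) (by simp [hab])
  · exact absurd ((hpat b a).mp h) (by simp [hab])

lemma argminOn_congr {v w : α → ℝ} (hw : Injective w)
    (hpat : ∀ a b, w a < w b ↔ v a < v b) (s : Finset α) (h : s.Nonempty) :
    argminOn v s h = argminOn w s h := by
  refine argminOn_unique (pattern_injective hw hpat) h (argminOn_mem w s h) ?_
  intro y hy
  by_contra hlt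
  push_neg at hlt
  exact absurd (argminOn_le w s h hy) (not_le.mpr ((hpat y _).mpr hlt))

lemma greedyStep_congr {v w : α → ℝ} (hw : Injective w)
    (hpat : ∀ a b, w a < w b ↔ v a < v b) : greedyStep v = greedyStep w := by
  funext z
  unfold greedyStep
  by_cases h : (Finset.univ.filter fun y => z < y).Nonempty
  · rw [dif_pos h, dif_pos h, argminOn_congr hw hpat]
  · rw [dif_neg h, dif_neg h]

lemma greedyMax_congr [Nonempty α] {v w : α → ℝ} (hw : Injective w)
    (hpat : ∀ a b, w a < w b ↔ v a < v b) : greedyMax v = greedyMax w := by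
  unfold greedyMax
  rw [greedyStep_congr hw hpat, argminOn_congr hw hpat]

lemma greedyMax_mono_at [Nonempty α] {w w' : α → ℝ} (hw : Injective w) (hw' : Injective w')
    {x : α} (hagree : ∀ y, y ≠ x → w' y = w y) (hc : w' x ≤ w x)
    (hx : greedyMax w = x) : greedyMax w' = x := by
  have hmax : ¬ (Finset.univ.filter fun y => x < y).Nonempty := hx ▸ terminal_max w _
  have key : ∀ n (z : α), (Finset.univ.filter fun y => z < y).card ≤ n →
      (greedyStep w)^[Fintype.card α] z = x → (greedyStep w')^[Fintype.card α] z = x := by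
    intro n
    induction n with
    | zero =>
      intro z hzc hz
      have he : ¬ (Finset.univ.filter fun y => z < y).Nonempty := by
        rw [Finset.nonempty_iff_ne_empty]
        simp only [ne_eq, not_not]
        exact Finset.card_eq_zero.mp (Nat.le_zero.mp hzc)
      rw [Function.iterate_fixed (greedyStep_of_max w' he)]
      rw [Function.iterate_fixed (greedyStep_of_max w he)] at hz
      exact hz
    | succ n ih =>
      intro z hzc hz
      by_cases h : (Finset.univ.filter fun y => z < y).Nonempty
      · set b := argminOn w' _ h with hb
        have hstep' : greedyStep w' z = b := dif_pos h
        by_cases hbx : b = x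
        · rw [← terminal_step w' z, hstep', hbx,
            Function.iterate_fixed (greedyStep_of_max w' hmax)]
        · have hba : argminOn w _ h = b := by
            refine argminOn_unique hw h (argminOn_mem w' _ h) ?_
            intro y hy
            have h1 : w' b ≤ w' y := argminOn_le w' _ h hy
            rw [hagree b hbx] at h1
            by_cases hyx : y = x
            · subst hyx
              exact h1.trans hc
            · rwa [hagree y hyx] at h1
          have hstep : greedyStep w z = b := by rw [greedyStep, dif_pos h, hba]
          have hzb : z < b := hstep ▸ lt_greedyStep w h
          have hterm : (greedyStep w)^[Fintype.card α] b = x := by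
            rw [← hstep, terminal_step]; exact hz
          have := ih b (by have := card_filter_lt_of_lt hzb; omega) hterm
          rw [← terminal_step w' z, hstep']
          exact this
      · rw [Function.iterate_fixed (greedyStep_of_max w' h)]
        rw [Function.iterate_fixed (greedyStep_of_max w h)] at hz
        exact hz
  unfold greedyMax
  set z₀ := argminOn w' Finset.univ Finset.univ_nonempty with hz₀
  by_cases hz0x : z₀ = x
  · rw [hz0x, Function.iterate_fixed (greedyStep_of_max w' hmax)]
  · have hz0 : argminOn w Finset.univ Finset.univ_nonempty = z₀ := by
      refine argminOn_unique hw Finset.univ_nonempty (Finset.mem_univ _) ?_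
      intro y _
      have h1 : w' z₀ ≤ w' y := argminOn_le w' _ Finset.univ_nonempty (Finset.mem_univ y)
      rw [hagree z₀ hz0x] at h1
      by_cases hyx : y = x
      · subst hyx
        exact h1.trans hc
      · rwa [hagree y hyx] at h1
    refine key (Fintype.card α) z₀ (le_trans (Finset.card_filter_le _ _) (by simp)) ?_
    unfold greedyMax at hx
    rw [hz0] at hx
    exact hx

end Det

lemma greedyMax_instIrrel {α : Type*} [PartialOrder α] (i1 i2 : Fintype α)
    (n1 n2 : Nonempty α) (w : α → ℝ) :
    @greedyMax α _ i1 n1 w = @greedyMax α _ i2 n2 w := by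
  cases Subsingleton.elim i1 i2
  rfl

section Transfer

variable {α : Type*} [PartialOrder α] [Fintype α]

lemma isGreedyMaxOn_congr {v w : α → ℝ} (hw : Injective w)
    (hpat : ∀ a b, w a < w b ↔ v a < v b) {x : α} :
    IsGreedyMaxOn w Set.univ x ↔ IsGreedyMaxOn v Set.univ x := by
  unfold IsGreedyMaxOn
  constructor
  · rintro ⟨hx, h⟩
    refine ⟨hx, ?_⟩
    haveI : Nonempty (Set.univ : Set α) := ⟨⟨x, hx⟩⟩
    exact (greedyMax_instIrrel _ _ _ _ _).trans
      ((greedyMax_congr (hw.comp Subtype.val_injective) (fun a b => hpat a.1 b.1)).trans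
        ((greedyMax_instIrrel _ _ _ _ _).trans h))
  · rintro ⟨hx, h⟩
    refine ⟨hx, ?_⟩
    haveI : Nonempty (Set.univ : Set α) := ⟨⟨x, hx⟩⟩
    exact (greedyMax_instIrrel _ _ _ _ _).trans
      (((greedyMax_congr (hw.comp Subtype.val_injective) (fun a b => hpat a.1 b.1)).symm).trans
        ((greedyMax_instIrrel _ _ _ _ _).trans h))

lemma isGreedyMaxOn_mono_at {w w' : α → ℝ} (hw : Injective w) (hw' : Injective w') {x : α}
    (hagree : ∀ y, y ≠ x → w' y = w y) (hc : w' x ≤ w x)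
    (hx : IsGreedyMaxOn w Set.univ x) : IsGreedyMaxOn w' Set.univ x := by
  obtain ⟨hxm, h⟩ := hx
  haveI : Nonempty (Set.univ : Set α) := ⟨⟨x, hxm⟩⟩
  refine ⟨hxm, ?_⟩
  have h2 : greedyMax (fun y : (Set.univ : Set α) => w y.1) = ⟨x, hxm⟩ :=
    (greedyMax_instIrrel _ _ _ _ _).trans h
  have h3 := greedyMax_mono_at (w := fun y : (Set.univ : Set α) => w y.1)
    (w' := fun y : (Set.univ : Set α) => w' y.1)
    (x := (⟨x, hxm⟩ : (Set.univ : Set α))) (hw.comp Subtype.val_injective)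
    (hw'.comp Subtype.val_injective)
    (fun y hy => hagree y.1 (fun hh => hy (Subtype.ext hh))) hc h2
  exact (greedyMax_instIrrel _ _ _ _ _).trans h3

end Transfer

section Pattern

variable {P : Type} [Fintype P] [PartialOrder P]

/-- The set of weight functions inducing the order pattern `σ`. -/
def patSet (σ : P ≃ Fin (Fintype.card P)) : Set (P → ℝ) :=
  {w | ∀ a b, w a < w b ↔ σ a < σ b}

lemma patSet_measurable (σ : P ≃ Fin (Fintype.card P)) : MeasurableSet (patSet σ) := by
  have : patSet σ = ⋂ (a : P) (b : P), {w : P → ℝ | w a < w b ↔ σ a < σ b} := by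
    ext w; simp [patSet, Set.mem_iInter]
  rw [this]
  refine MeasurableSet.iInter fun a => MeasurableSet.iInter fun b => ?_
  by_cases h : σ a < σ b
  · simp only [h, iff_true]
    exact measurableSet_lt (measurable_pi_apply a) (measurable_pi_apply b)
  · simp only [h, iff_false]
    exact (measurableSet_lt (measurable_pi_apply a) (measurable_pi_apply b)).compl

lemma patSet_injective {σ : P ≃ Fin (Fintype.card P)} {w : P → ℝ} (hw : w ∈ patSet σ) :
    Injective w := by
  intro a b hab
  apply σ.injective
  by_contra hne
  rcases lt_or_gt_of_ne hne with h | h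
  · exact absurd ((hw a b).mpr h) (by simp [hab])
  · exact absurd ((hw b a).mpr h) (by simp [hab])

lemma patSet_pattern {σ : P ≃ Fin (Fintype.card P)} {w : P → ℝ} (hw : w ∈ patSet σ)
    (a b : P) : w a < w b ↔ ((σ a : ℕ) : ℝ) < ((σ b : ℕ) : ℝ) := by
  rw [hw a b, Nat.cast_lt]
  exact Fin.lt_iff_val_lt_val

/-- every injective weight function has an order pattern -/
lemma exists_pattern {w : P → ℝ} (hw : Injective w) : ∃ σ, w ∈ patSet σ := by
  set s := Finset.univ.image w with hs
  have hcard : s.card = Fintype.card P := by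
    rw [hs, Finset.card_image_of_injective _ hw, Finset.card_univ]
  set oi := s.orderIsoOfFin hcard with hoi
  set σ₀ : P → Fin (Fintype.card P) :=
    fun a => oi.symm ⟨w a, Finset.mem_image_of_mem w (Finset.mem_univ a)⟩ with hσ₀
  have hpat : ∀ a b, w a < w b ↔ σ₀ a < σ₀ b := by
    intro a b
    rw [hσ₀]
    constructor
    · intro h; exact (OrderIso.lt_iff_lt oi.symm).mpr (Subtype.mk_lt_mk.mpr h)
    · intro h; exact Subtype.mk_lt_mk.mp ((OrderIso.lt_iff_lt oi.symm).mp h)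
  have hinj : Injective σ₀ := by
    intro a b hab
    apply hw
    by_contra hne
    rcases lt_or_gt_of_ne hne with h | h
    · exact absurd ((hpat a b).mp h) (by simp [hab])
    · exact absurd ((hpat b a).mp h) (by simp [hab])
  refine ⟨Equiv.ofBijective σ₀ ?_, ?_⟩
  · rw [Fintype.bijective_iff_injective_and_card]
    exact ⟨hinj, by simp⟩
  · intro a b
    exact hpat a b

lemma decomp (x : P) :
    {w : P → ℝ | IsGreedyMaxOn w Set.univ x} ∩ {w | Injective w} =
      ⋃ (σ : P ≃ Fin (Fintype.card P))
        (_ : IsGreedyMaxOn (fun p => ((σ p : ℕ) : ℝ)) Set.univ x), patSet σ := by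
  ext w
  simp only [Set.mem_inter_iff, Set.mem_setOf_eq, Set.mem_iUnion]
  constructor
  · rintro ⟨hA, hI⟩
    obtain ⟨σ, hσ⟩ := exists_pattern hI
    exact ⟨σ, (isGreedyMaxOn_congr hI (patSet_pattern hσ)).mp hA, hσ⟩
  · rintro ⟨σ, hgm, hσ⟩
    have hI := patSet_injective hσ
    exact ⟨(isGreedyMaxOn_congr hI (patSet_pattern hσ)).mpr hgm, hI⟩

lemma measurable_A_inter_I (x : P) :
    MeasurableSet ({w : P → ℝ | IsGreedyMaxOn w Set.univ x} ∩ {w | Injective w}) := by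
  rw [decomp]
  exact MeasurableSet.iUnion fun σ => MeasurableSet.iUnion fun _ => patSet_measurable σ

end Pattern

section Meas

variable {P : Type} [Fintype P] [PartialOrder P] [Nonempty P]

instance nu_prob : IsProbabilityMeasure (volume.restrict (Set.Icc (0:ℝ) 1)) :=
  ⟨by rw [Measure.restrict_apply_univ, Real.volume_Icc]; norm_num⟩

lemma measure_cyl (a : P) {s : Set ℝ} (hs : MeasurableSet s) :
    Measure.pi (fun _ : P => volume.restrict (Set.Icc (0:ℝ) 1)) (eval a ⁻¹' s) =
      volume.restrict (Set.Icc (0:ℝ) 1) s := by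
  have h1 : eval a ⁻¹' s = Set.pi Set.univ (fun i : P => if i = a then s else Set.univ) := by
    ext w
    simp only [Set.mem_preimage, Set.mem_univ_pi]
    constructor
    · intro h i
      by_cases hi : i = a
      · subst hi; simp [h]
      · simp [hi]
    · intro h
      have := h a
      simpa using this
  rw [h1, Measure.pi_pi]
  rw [Finset.prod_eq_single a]
  · simp
  · intro b _ hb
    simp [hb]
  · intro h
    simp at h

lemma null_graph (a b : P) (hab : ¬ a = b) {f : ℝ → ℝ} (hf : Measurable f) :
    Measure.pi (fun _ : P => volume.restrict (Set.Icc (0:ℝ) 1)) {w : P → ℝ | w a = f (w b)}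
      = 0 := by
  set ν := volume.restrict (Set.Icc (0:ℝ) 1) with hν
  have hmp := measurePreserving_piEquivPiSubtypeProd (fun _ : P => ν) (fun i => i = b)
  set T : Set ((({i : P // i = b} → ℝ)) × ({i : P // ¬ i = b} → ℝ)) :=
    {q | q.2 ⟨a, hab⟩ = f (q.1 ⟨b, rfl⟩)} with hT
  have hTm : MeasurableSet T := by
    apply measurableSet_eq_fun
    · exact (measurable_pi_apply _).comp measurable_snd
    · exact hf.comp ((measurable_pi_apply _).comp measurable_fst)
  have hpre : (MeasurableEquiv.piEquivPiSubtypeProd (fun _ : P => ℝ) (fun i => i = b)) ⁻¹' T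
      = {w : P → ℝ | w a = f (w b)} := rfl
  rw [← hpre, hmp.measure_preimage hTm.nullMeasurableSet]
  rw [Measure.prod_apply hTm]
  have hz : ∀ g : {i : P // i = b} → ℝ,
      (Measure.pi fun _ : {i : P // ¬ i = b} => ν) (Prod.mk g ⁻¹' T) = 0 := by
    intro g
    have he : Prod.mk g ⁻¹' T =
        eval (⟨a, hab⟩ : {i : P // ¬ i = b}) ⁻¹' ({f (g ⟨b, rfl⟩)} : Set ℝ) := by
      ext v
      simp [hT]
    rw [he]
    exact Measure.pi_eval_preimage_null _ (measure_singleton _)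
  simp [hz]

lemma null_noninj :
    Measure.pi (fun _ : P => volume.restrict (Set.Icc (0:ℝ) 1))
      {w : P → ℝ | ¬ Injective w} = 0 := by
  have hsub : {w : P → ℝ | ¬ Injective w} ⊆
      ⋃ (a : P) (b : P) (_ : ¬ a = b), {w : P → ℝ | w a = w b} := by
    intro w hw
    simp only [Set.mem_setOf_eq, Injective, not_forall] at hw
    obtain ⟨a, b, hab, hne⟩ := hw
    exact Set.mem_iUnion.mpr ⟨a, Set.mem_iUnion.mpr ⟨b, Set.mem_iUnion.mpr ⟨hne, hab⟩⟩⟩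
  refine measure_mono_null hsub ?_
  refine measure_iUnion_null fun a => measure_iUnion_null fun b => measure_iUnion_null fun hab => ?_
  exact null_graph a b hab (f := id) measurable_id

variable {t : ℝ}

lemma map_mul_restrict (ht0 : 0 < t) (ht1 : t ≤ 1) :
    Measure.map (fun u : ℝ => t * u) (volume.restrict (Set.Icc (0:ℝ) 1)) =
      (ENNReal.ofReal t)⁻¹ • volume.restrict (Set.Icc 0 t) := by
  have hpre : (fun u : ℝ => t * u) ⁻¹' (Set.Icc 0 t) = Set.Icc 0 1 := by
    ext u
    simp only [Set.mem_preimage, Set.mem_Icc]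
    constructor
    · rintro ⟨h1, h2⟩
      constructor <;> nlinarith
    · rintro ⟨h1, h2⟩
      constructor <;> nlinarith
  rw [show Set.Icc (0:ℝ) 1 = (fun u : ℝ => t * u) ⁻¹' (Set.Icc 0 t) from hpre.symm]
  rw [← Measure.restrict_map (measurable_const_mul t) measurableSet_Icc]
  rw [Real.map_volume_mul_left (ne_of_gt ht0)]
  rw [abs_of_pos (inv_pos.mpr ht0), Measure.restrict_smul, ENNReal.ofReal_inv_of_pos ht0]


/-- The scaling map at coordinate `x`. -/
noncomputable def PhiMap (x : P) (t : ℝ) : (P → ℝ) → (P → ℝ) :=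
  fun w i => if i = x then t * w x else w i

lemma PhiMap_measurable (x : P) : Measurable (PhiMap (P := P) x t) := by
  apply measurable_pi_lambda
  intro i
  by_cases hi : i = x
  · simp only [PhiMap, hi, if_pos rfl]
    have h : Measurable fun w : P → ℝ => w x := measurable_pi_apply x
    exact h.const_mul t
  · simp only [PhiMap, hi, if_false]
    exact measurable_pi_apply i

/-- target factor measures for the pushforward of `PhiMap` -/
noncomputable def nuT (x : P) (t : ℝ) : P → Measure ℝ := fun i =>
  if i = x then (ENNReal.ofReal t)⁻¹ • volume.restrict (Set.Icc 0 t)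
  else volume.restrict (Set.Icc (0:ℝ) 1)

lemma nuT_finite (x : P) (ht0 : 0 < t) : ∀ i : P, IsFiniteMeasure (nuT x t i) := by
  intro i
  by_cases hi : i = x
  · rw [nuT, if_pos hi]
    constructor
    rw [Measure.smul_apply, smul_eq_mul, Measure.restrict_apply_univ, Real.volume_Icc,
      sub_zero, ENNReal.inv_mul_cancel (ENNReal.ofReal_pos.mpr ht0).ne' ENNReal.ofReal_ne_top]
    exact ENNReal.one_lt_top
  · rw [nuT, if_neg hi]
    infer_instance

lemma map_PhiMap (x : P) (ht0 : 0 < t) (ht1 : t ≤ 1) :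
    Measure.map (PhiMap x t) (Measure.pi fun _ : P => volume.restrict (Set.Icc (0:ℝ) 1)) =
      Measure.pi (nuT x t) := by
  haveI := nuT_finite (P := P) x ht0
  refine (Measure.pi_eq fun s hs => ?_).symm
  rw [Measure.map_apply (PhiMap_measurable x) (MeasurableSet.univ_pi hs)]
  have hpre : PhiMap x t ⁻¹' Set.pi Set.univ s =
      Set.pi Set.univ (fun i => if i = x then (fun u : ℝ => t * u) ⁻¹' s x else s i) := by
    ext w
    simp only [Set.mem_preimage, Set.mem_univ_pi]
    refine forall_congr' fun i => ?_
    by_cases hi : i = x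
    · subst hi
      simp [PhiMap]
    · simp [PhiMap, hi]
  rw [hpre, Measure.pi_pi]
  refine Finset.prod_congr rfl fun i _ => ?_
  by_cases hi : i = x
  · subst hi
    rw [if_pos rfl, nuT, if_pos rfl,
      ← Measure.map_apply (measurable_const_mul t) (hs i), map_mul_restrict ht0 ht1]
  · rw [if_neg hi, nuT, if_neg hi]

lemma pi_nuT (x : P) (ht0 : 0 < t) (ht1 : t ≤ 1) :
    Measure.pi (nuT (P := P) x t) =
      (ENNReal.ofReal t)⁻¹ •
        (Measure.pi fun _ : P => volume.restrict (Set.Icc (0:ℝ) 1)).restrict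
          {w : P → ℝ | w x ≤ t} := by
  haveI := nuT_finite (P := P) x ht0
  refine Measure.pi_eq fun s hs => ?_
  rw [Measure.smul_apply, Measure.restrict_apply (MeasurableSet.univ_pi hs)]
  have hint : Set.pi Set.univ s ∩ {w : P → ℝ | w x ≤ t} =
      Set.pi Set.univ (fun i => if i = x then s x ∩ Set.Iic t else s i) := by
    ext w
    simp only [Set.mem_inter_iff, Set.mem_univ_pi, Set.mem_setOf_eq]
    constructor
    · rintro ⟨h1, h2⟩ i
      by_cases hi : i = x
      · subst hi; simp [h1 i, h2]
      · simp [hi, h1 i]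
    · intro h
      refine ⟨fun i => ?_, ?_⟩
      · have := h i
        by_cases hi : i = x
        · subst hi; simp at this; exact this.1
        · simpa [hi] using this
      · have := h x
        simp at this
        exact this.2
  rw [hint, Measure.pi_pi]
  rw [← Finset.mul_prod_erase Finset.univ _ (Finset.mem_univ x),
    ← Finset.mul_prod_erase Finset.univ (fun i => nuT x t i (s i)) (Finset.mem_univ x),
    smul_eq_mul, ← mul_assoc]
  congr 1
  · -- c * ν (s x ∩ Iic t) = nuT x t x (s x)
    rw [if_pos rfl, nuT, if_pos rfl, Measure.smul_apply, smul_eq_mul,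
      Measure.restrict_apply ((hs x).inter measurableSet_Iic),
      Measure.restrict_apply (hs x)]
    congr 2
    ext u
    simp only [Set.mem_inter_iff, Set.mem_Iic, Set.mem_Icc]
    constructor
    · rintro ⟨⟨h1, h2⟩, h3, h4⟩
      exact ⟨h1, h3, h2⟩
    · rintro ⟨h1, h2, h3⟩
      exact ⟨⟨h1, h3⟩, h2, h3.trans ht1⟩
  · refine Finset.prod_congr rfl fun i hi => ?_
    have hix : i ≠ x := (Finset.mem_erase.mp hi).1
    rw [if_neg hix, nuT, if_neg hix]

end Meas


/-- Conditioning on `W x ≤ t` can only increase the probability that `x`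
is the greedy maximum: `μ(x) ≤ μ_t(x)` for `0 < t ≤ 1`. -/
theorem muGreedy_le_muGreedyCond (P : Type) [Fintype P] [PartialOrder P] [Nonempty P]
    (x : P) {t : ℝ} (ht0 : 0 < t) (ht1 : t ≤ 1) :
    muGreedy P x ≤ muGreedyCond P t x := by
  unfold muGreedy muGreedyCond
  rw [show {w : P → ℝ | IsGreedyMaxOn w Set.univ x ∧ w x ≤ t} =
      {w : P → ℝ | IsGreedyMaxOn w Set.univ x} ∩ {w : P → ℝ | w x ≤ t} from rfl]
  set μP := Measure.pi fun _ : P => volume.restrict (Set.Icc (0:ℝ) 1) with hμP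
  set A := {w : P → ℝ | IsGreedyMaxOn w Set.univ x} with hA
  set B := {w : P → ℝ | w x ≤ t} with hB
  set I := {w : P → ℝ | Injective w} with hI
  set C := {w : P → ℝ | ∀ y, w y ∈ Set.Icc (0:ℝ) 1} with hC
  set N := ⋃ (y : P) (_ : ¬ y = x), {w : P → ℝ | w y = t * w x} with hN
  have hBmeas : MeasurableSet B := measurableSet_le (measurable_pi_apply x) measurable_const
  have hMmeas : MeasurableSet ((A ∩ I) ∩ B) := (measurable_A_inter_I x).inter hBmeas
  have hBval : μP B = ENNReal.ofReal t := by
    rw [hμP, show B = eval x ⁻¹' Set.Iic t from rfl, measure_cyl x measurableSet_Iic,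
      Measure.restrict_apply measurableSet_Iic]
    have h2 : Set.Iic t ∩ Set.Icc (0:ℝ) 1 = Set.Icc 0 t := by
      ext u
      simp only [Set.mem_inter_iff, Set.mem_Iic, Set.mem_Icc]
      constructor
      · rintro ⟨h1, h2, h3⟩; exact ⟨h2, h1⟩
      · rintro ⟨h1, h2⟩; exact ⟨h2, h1, h2.trans ht1⟩
    rw [h2, Real.volume_Icc, sub_zero]
  have ht0' : ENNReal.ofReal t ≠ 0 := (ENNReal.ofReal_pos.mpr ht0).ne'
  have httop : ENNReal.ofReal t ≠ ⊤ := ENNReal.ofReal_ne_top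
  have hIc : μP {w : P → ℝ | ¬ Injective w} = 0 := null_noninj
  have hCc : μP Cᶜ = 0 := by
    have hsub : Cᶜ ⊆ ⋃ (y : P), eval y ⁻¹' (Set.Icc (0:ℝ) 1)ᶜ := by
      intro w hw
      simp only [hC, Set.mem_compl_iff, Set.mem_setOf_eq, not_forall] at hw
      obtain ⟨y, hy⟩ := hw
      exact Set.mem_iUnion.mpr ⟨y, hy⟩
    refine measure_mono_null hsub (measure_iUnion_null fun y => ?_)
    rw [hμP, measure_cyl y measurableSet_Icc.compl,
      Measure.restrict_apply measurableSet_Icc.compl]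
    simp
  have hNnull : μP N = 0 := by
    refine measure_iUnion_null fun y => measure_iUnion_null fun hy => ?_
    exact null_graph y x hy (f := fun u => t * u) (measurable_const_mul t)
  have hincl : (A ∩ I ∩ C) \ N ⊆ PhiMap x t ⁻¹' ((A ∩ I) ∩ B) := by
    rintro w ⟨⟨⟨hwA, hwI⟩, hwC⟩, hwN⟩
    have hwx0 : (0:ℝ) ≤ w x := (hwC x).1
    have hwx1 : w x ≤ 1 := (hwC x).2
    have hΦinj : Injective (PhiMap x t w) := by
      intro a b hab
      by_cases ha : a = x <;> by_cases hb : b = x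
      · rw [ha, hb]
      · exfalso
        apply hwN
        refine Set.mem_iUnion.mpr ⟨b, Set.mem_iUnion.mpr ⟨hb, ?_⟩⟩
        simpa [PhiMap, ha, hb] using hab.symm
      · exfalso
        apply hwN
        refine Set.mem_iUnion.mpr ⟨a, Set.mem_iUnion.mpr ⟨ha, ?_⟩⟩
        simpa [PhiMap, ha, hb] using hab
      · apply hwI
        simpa [PhiMap, ha, hb] using hab
    refine ⟨⟨?_, hΦinj⟩, ?_⟩
    · refine isGreedyMaxOn_mono_at hwI hΦinj (fun y hy => ?_) ?_ hwA
      · simp [PhiMap, hy]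
      · show (if x = x then t * w x else w x) ≤ w x
        rw [if_pos rfl]
        nlinarith
    · show (if x = x then t * w x else w x) ≤ t
      rw [if_pos rfl]
      nlinarith
  have step1 : μP A ≤ μP (A ∩ I ∩ C) := by
    have hsub : A ⊆ (A ∩ I ∩ C) ∪ ({w : P → ℝ | ¬ Injective w} ∪ Cᶜ) := by
      intro w hw
      by_cases h1 : Injective w
      · by_cases h2 : w ∈ C
        · exact Or.inl ⟨⟨hw, h1⟩, h2⟩
        · exact Or.inr (Or.inr h2)
      · exact Or.inr (Or.inl h1)
    calc μP A ≤ μP ((A ∩ I ∩ C) ∪ ({w : P → ℝ | ¬ Injective w} ∪ Cᶜ)) := measure_mono hsub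
      _ ≤ μP (A ∩ I ∩ C) + μP ({w : P → ℝ | ¬ Injective w} ∪ Cᶜ) := measure_union_le _ _
      _ ≤ μP (A ∩ I ∩ C) + (μP {w : P → ℝ | ¬ Injective w} + μP Cᶜ) := by
          gcongr
          exact measure_union_le _ _
      _ = μP (A ∩ I ∩ C) := by rw [hIc, hCc]; ring
  have step2 : μP (A ∩ I ∩ C) ≤ μP (PhiMap x t ⁻¹' ((A ∩ I) ∩ B)) := by
    calc μP (A ∩ I ∩ C) ≤ μP (((A ∩ I ∩ C) \ N) ∪ N) := measure_mono (Set.subset_diff_union _ _)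
      _ ≤ μP ((A ∩ I ∩ C) \ N) + μP N := measure_union_le _ _
      _ = μP ((A ∩ I ∩ C) \ N) := by rw [hNnull, add_zero]
      _ ≤ _ := measure_mono hincl
  have step3 : μP (PhiMap x t ⁻¹' ((A ∩ I) ∩ B)) =
      (ENNReal.ofReal t)⁻¹ * μP ((A ∩ I) ∩ B) := by
    rw [hμP, ← Measure.map_apply (PhiMap_measurable x) hMmeas, map_PhiMap x ht0 ht1,
      pi_nuT x ht0 ht1, Measure.smul_apply, smul_eq_mul, Measure.restrict_apply hMmeas]
    rw [Set.inter_assoc, Set.inter_self]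
  have step4 : μP ((A ∩ I) ∩ B) ≤ μP (A ∩ B) :=
    measure_mono (Set.inter_subset_inter_left _ Set.inter_subset_left)
  have hchain : μP A ≤ (ENNReal.ofReal t)⁻¹ * μP (A ∩ B) := by
    refine (step1.trans (step2.trans step3.le)).trans ?_
    exact mul_le_mul_right step4 _
  rw [hBval, ENNReal.le_div_iff_mul_le (Or.inl ht0') (Or.inl httop)]
  calc μP A * ENNReal.ofReal t ≤ ((ENNReal.ofReal t)⁻¹ * μP (A ∩ B)) * ENNReal.ofReal t :=
        mul_le_mul_left hchain _
    _ = μP (A ∩ B) := by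
        rw [mul_comm ((ENNReal.ofReal t)⁻¹) (μP (A ∩ B)), mul_assoc,
          ENNReal.inv_mul_cancel ht0' httop, mul_one]
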